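/- arXiv:2208.01470 — 2 statements merged into one kernel-verified Lean document; each statement's English description precedes it below -/
import Mathlib

section
/- Let n_1, n_2, ..., n_r be positive integers and let μ be an index with 2 ≤ μ ≤ r and n_μ − 1 ≥ n_1 + 1. Then f_3 applied to the multiset obtained from {n_1, n_2, ..., n_r} by replacing n_1 with n_1 + 1 and n_μ with n_μ − 1 is at most f_3(n_1, n_2, ..., n_r) + n_μ − (n_1 + 1). -/
open SimpleGraph Finset

/-- `F` has a (not necessarily induced) copy in `G`:  there is an injective map of the
vertices of `F` into the vertices of `G` preserving adjacency. -/
def HasCopy {α β : Type*} (G : SimpleGraph α) (F : SimpleGraph β) : Prop :=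
  ∃ f : β → α, Function.Injective f ∧ ∀ ⦃a b⦄, F.Adj a b → G.Adj (f a) (f b)

/-- `exNum G F` is the maximum number of edges of a spanning subgraph of `G`
containing no copy of `F`. -/
noncomputable def exNum {α β : Type*} [Fintype α] (G : SimpleGraph α) (F : SimpleGraph β) : ℕ :=
  sSup {m | ∃ H : SimpleGraph α, H ≤ G ∧ ¬ HasCopy H F ∧ m = H.edgeSet.ncard}

/-- `kCliques k t` is the disjoint union of `k` copies of the complete graph `K_t`. -/
def kCliques (k t : ℕ) : SimpleGraph (Fin k × Fin t) :=
  SimpleGraph.fromRel (fun p q => p.1 = q.1)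

/-- The complete multipartite graph with parts of sizes `n 0, …, n (r-1)`. -/
abbrev completeMultipartite {r : ℕ} (n : Fin r → ℕ) : SimpleGraph (Σ i : Fin r, Fin (n i)) :=
  completeMultipartiteGraph (fun i => Fin (n i))

/-- The sum of `x` over the part of the (labelled) partition `g` with label `i`. -/
def partSum {r s : ℕ} (x : Fin r → ℕ) (g : Fin r → Fin s) (i : Fin s) : ℕ :=
  ∑ a ∈ Finset.univ.filter (fun a => g a = i), x a

/-- The sum, over unordered pairs of distinct parts of the (labelled) partition `g`,
of the products of the part sums of `x`. -/
def pairProdSum {r s : ℕ} (x : Fin r → ℕ) (g : Fin r → Fin s) : ℕ :=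
  ∑ p ∈ Finset.univ.filter (fun p : Fin s × Fin s => p.1 < p.2),
    partSum x g p.1 * partSum x g p.2

/-- The function `f_t` : the maximum, over all partitions of `{0, …, r-1}` into `t-1`
nonempty parts (encoded as surjections onto `Fin (t-1)`), of the sum over unordered pairs
of distinct parts of the products of the part sums. -/
def fT {r : ℕ} (t : ℕ) (x : Fin r → ℕ) : ℕ :=
  (Finset.univ.filter (fun g : Fin r → Fin (t - 1) => Function.Surjective g)).sup
    (fun g => pairProdSum x g)

/-!
Fix a partition into two parts. If it does not separate `n₁` and `n_μ`, moving a unit from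
`n_μ` to `n₁` leaves its product unchanged. Otherwise let `a`, `b` be the part sums of the
parts containing `n₁` and `n_μ`, and `d = n_μ - n₁`: the move turns the product `a b` into
`(a + 1)(b - 1)`, while swapping `n₁` and `n_μ`, which does not change `f₃`, turns it into
`(a + d)(b - d)`. Concavity of `c ↦ (a + c)(b - c)` gives
`(a + 1)(b - 1) ≤ max (a b) ((a + d)(b - d)) + d - 1`.
-/

section PartSums

variable {r s : ℕ}

lemma partSum_add (x y : Fin r → ℕ) (g : Fin r → Fin s) (i : Fin s) :
    partSum (x + y) g i = partSum x g i + partSum y g i :=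
  Finset.sum_add_distrib

lemma partSum_single (j : Fin r) (c : ℕ) (g : Fin r → Fin s) (i : Fin s) :
    partSum (Pi.single j c) g i = if g j = i then c else 0 := by
  simp [partSum, Pi.single_apply]

lemma partSum_add_single_of_add_single_eq {x y : Fin r → ℕ} {j k : Fin r} {c : ℕ}
    (h : y + Pi.single k c = x + Pi.single j c) (g : Fin r → Fin s) (i : Fin s) :
    partSum y g i + (if g k = i then c else 0) = partSum x g i + (if g j = i then c else 0) := by
  rw [← partSum_single, ← partSum_single, ← partSum_add, ← partSum_add, h]

lemma partSum_comp_perm (x : Fin r → ℕ) (σ : Equiv.Perm (Fin r)) (g : Fin r → Fin s)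
    (i : Fin s) : partSum (x ∘ σ) g i = partSum x (g ∘ σ.symm) i := by
  simp only [partSum, Finset.sum_filter, Function.comp_apply]
  rw [← Equiv.sum_comp σ (fun b => if g (σ.symm b) = i then x b else 0)]
  simp only [Equiv.symm_apply_apply]

lemma pairProdSum_comp_perm (x : Fin r → ℕ) (σ : Equiv.Perm (Fin r)) (g : Fin r → Fin s) :
    pairProdSum (x ∘ σ) g = pairProdSum x (g ∘ σ.symm) := by
  simp only [pairProdSum, partSum_comp_perm]

lemma pairProdSum_le_fT {t : ℕ} (x : Fin r → ℕ) {g : Fin r → Fin (t - 1)}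
    (hg : Function.Surjective g) : pairProdSum x g ≤ fT t x :=
  Finset.le_sup (f := fun g => pairProdSum x g) (by simpa using hg)

lemma pairProdSum_comp_perm_le_fT {t : ℕ} (x : Fin r → ℕ) (σ : Equiv.Perm (Fin r))
    {g : Fin r → Fin (t - 1)} (hg : Function.Surjective g) : pairProdSum (x ∘ σ) g ≤ fT t x := by
  rw [pairProdSum_comp_perm]
  exact pairProdSum_le_fT x (hg.comp σ.symm.surjective)

lemma pairProdSum_eq_of_add_single_eq {x y : Fin r → ℕ} {j k : Fin r} {c : ℕ}
    (h : y + Pi.single k c = x + Pi.single j c) {g : Fin r → Fin s} (hg : g j = g k) :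
    pairProdSum y g = pairProdSum x g := by
  have : partSum y g = partSum x g := funext fun i => by
    have := partSum_add_single_of_add_single_eq h g i
    rw [hg] at this
    omega
  rw [pairProdSum, this, pairProdSum]

lemma pairProdSum_fin_two (x : Fin r → ℕ) (g : Fin r → Fin 2) :
    pairProdSum x g = partSum x g 0 * partSum x g 1 := by
  have : Finset.univ.filter (fun p : Fin 2 × Fin 2 => p.1 < p.2) = {(0, 1)} := by decide
  simp [pairProdSum, this]

lemma pairProdSum_fin_two_of_ne (x : Fin r → ℕ) {g : Fin r → Fin 2} {j k : Fin r}
    (h : g j ≠ g k) : pairProdSum x g = partSum x g (g j) * partSum x g (g k) := by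
  rw [pairProdSum_fin_two]
  rcases Fin.exists_fin_two.mp ⟨g j, rfl⟩ with hj | hj <;>
    rcases Fin.exists_fin_two.mp ⟨g k, rfl⟩ with hk | hk <;> simp_all [mul_comm]

end PartSums

lemma succ_mul_add_le_max_add (a c e : ℕ) :
    (a + 1) * (c + e) ≤ max (a * (c + e + 1)) ((a + e + 1) * c) + e := by
  rcases le_total c a with hca | hac
  · nlinarith [le_max_left (a * (c + e + 1)) ((a + e + 1) * c)]
  · nlinarith [le_max_right (a * (c + e + 1)) ((a + e + 1) * c)]

lemma pairProdSum_le_max_add_of_add_single_eq {r : ℕ} {n x y : Fin r → ℕ} {j k : Fin r}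
    {e : ℕ} (hx : x + Pi.single k 1 = n + Pi.single j 1)
    (hy : y + Pi.single k (e + 1) = n + Pi.single j (e + 1)) (g : Fin r → Fin 2) :
    pairProdSum x g ≤ max (pairProdSum n g) (pairProdSum y g) + e := by
  by_cases hg : g j = g k
  · rw [pairProdSum_eq_of_add_single_eq hx hg]
    exact (le_max_left _ _).trans (Nat.le_add_right _ _)
  have hx_part := partSum_add_single_of_add_single_eq hx g
  have hy_part := partSum_add_single_of_add_single_eq hy g
  set a := partSum n g (g j)
  set c := partSum y g (g k)
  have hxj : partSum x g (g j) = a + 1 := by simpa [hg, Ne.symm hg] using hx_part (g j)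
  have hxk : partSum x g (g k) + 1 = partSum n g (g k) := by
    simpa [hg, Ne.symm hg] using hx_part (g k)
  have hyj : partSum y g (g j) = a + e + 1 := by
    simpa [hg, Ne.symm hg, add_assoc] using hy_part (g j)
  have hyk : c + (e + 1) = partSum n g (g k) := by simpa [hg, Ne.symm hg] using hy_part (g k)
  simp only [pairProdSum_fin_two_of_ne _ hg, hxj, hyj, ← hyk]
  calc (a + 1) * partSum x g (g k) = (a + 1) * (c + e) := by congr 1; omega
    _ ≤ max (a * (c + (e + 1))) ((a + e + 1) * c) + e := succ_mul_add_le_max_add a c e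

lemma update_update_add_single {r : ℕ} (n : Fin r → ℕ) {j k : Fin r} (hjk : j ≠ k)
    (hk : 1 ≤ n k) :
    Function.update (Function.update n j (n j + 1)) k (n k - 1) + Pi.single k 1 =
      n + Pi.single j 1 := by
  ext a
  rcases eq_or_ne a k with rfl | hak
  · simp [hjk.symm]; omega
  rcases eq_or_ne a j with rfl | haj <;> simp [*]

lemma comp_swap_add_single {r : ℕ} (n : Fin r → ℕ) {j k : Fin r} (hjk : j ≠ k)
    (h : n j ≤ n k) :
    n ∘ Equiv.swap j k + Pi.single k (n k - n j) = n + Pi.single j (n k - n j) := by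
  ext a
  rcases eq_or_ne a k with rfl | hak
  · simp [hjk.symm]; omega
  rcases eq_or_ne a j with rfl | haj
  · simp [hjk]; omega
  · simp [Equiv.swap_apply_of_ne_of_ne haj hak, *]

theorem stmt_7_general (r : ℕ) (n : Fin r → ℕ) (μ : Fin r) (h : n ⟨0, μ.pos⟩ + 2 ≤ n μ) :
    fT 3 (Function.update (Function.update n ⟨0, μ.pos⟩ (n ⟨0, μ.pos⟩ + 1)) μ (n μ - 1)) ≤
      fT 3 n + (n μ - (n ⟨0, μ.pos⟩ + 1)) := by
  set j : Fin r := ⟨0, μ.pos⟩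
  have hjμ : j ≠ μ := fun hj => by rw [hj] at h; omega
  have hx := update_update_add_single n hjμ (by omega)
  have hσ := comp_swap_add_single n hjμ (by omega)
  rw [show n μ - n j = n μ - (n j + 1) + 1 by omega] at hσ
  refine Finset.sup_le fun g hg => ?_
  replace hg : Function.Surjective g := (Finset.mem_filter.mp hg).2
  refine (pairProdSum_le_max_add_of_add_single_eq hx hσ g).trans ?_
  gcongr
  exact max_le (pairProdSum_le_fT n hg) (pairProdSum_comp_perm_le_fT n _ hg)

/-- Proposition: if `n_μ − 1 ≥ n_1 + 1` (with `μ ≠ 1`), then replacing `n_1` by `n_1 + 1`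
and `n_μ` by `n_μ − 1` increases `f_3` by at most `n_μ − (n_1 + 1)`. -/
theorem stmt_7 (r : ℕ) (n : Fin r → ℕ) (hpos : ∀ i, 0 < n i) (μ : Fin r)
    (hμ : μ ≠ ⟨0, μ.pos⟩) (h : n ⟨0, μ.pos⟩ + 2 ≤ n μ) :
    fT 3 (Function.update (Function.update n ⟨0, μ.pos⟩ (n ⟨0, μ.pos⟩ + 1)) μ (n μ - 1)) ≤
      fT 3 n + (n μ - (n ⟨0, μ.pos⟩ + 1)) :=
  stmt_7_general r n μ h
end

section
/- Let k ≥ 2 and let G be a graph containing no k pairwise vertex-disjoint triangles. Let u_2 and u_3 be adjacent vertices of G such that, for each i ∈ {2,3}, the graph G − u_i contains k − 1 pairwise vertex-disjoint triangles. Let A ⊆ V(G) satisfy |N_G(u_2) ∩ N_G(u_3) ∩ A| ≥ 6(k−1) + 1. Then there exists a vertex u_0 ∈ A ∩ N_G(u_2) ∩ N_G(u_3) such that |N_G(u_0) ∩ N_G(u_2)| ≤ 3(k−1) and |N_G(u_0) ∩ N_G(u_3)| ≤ 3(k−1). -/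
open SimpleGraph Finset

/-! The `k - 1` disjoint triangles avoiding `u₂` and those avoiding `u₃` cover at most
`6(k - 1)` vertices, so some common neighbour `u₀ ∈ A` of `u₂` and `u₃` lies on none of them.
A common neighbour `w` of `u₀` and `uᵢ` off the triangles avoiding `uᵢ` would give a `k`-th
disjoint triangle `u₀ uᵢ w`, so `N(u₀) ∩ N(uᵢ)` lies within those `3(k - 1)` vertices. -/

section

variable {α : Type*} {G : SimpleGraph α}

theorem hasCopy_iff_isContained {β : Type*} {F : SimpleGraph β} : HasCopy G F ↔ F ⊑ G :=
  ⟨fun ⟨f, hf, hadj⟩ => ⟨⟨⟨f, fun h => hadj h⟩, hf⟩⟩,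
    fun ⟨f⟩ => ⟨f, f.injective, fun _ _ => f.toHom.map_adj⟩⟩

theorem kCliques_adj {k t : ℕ} {p q : Fin k × Fin t} :
    (kCliques k t).Adj p q ↔ p ≠ q ∧ p.1 = q.1 := by
  rw [kCliques, fromRel_adj, eq_comm (a := q.1), or_self]

theorem SimpleGraph.Copy.exists_notMem_range_of_induce_compl {β : Type*} {F : SimpleGraph β}
    {u : α} (h : F ⊑ G.induce {u}ᶜ) : ∃ f : Copy F G, u ∉ Set.range f :=
  let ⟨f⟩ := h
  ⟨(Copy.induce G _).comp f, fun ⟨x, hx⟩ => (f x).2 hx⟩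

theorem kCliques_succ_isContained {m t : ℕ} (f : Copy (kCliques m t) G) {s : Finset α}
    (hs : G.IsNClique t s) (hfs : Disjoint (Set.range f) s) : kCliques (m + 1) t ⊑ G := by
  set g : Fin t → α := fun j => (s.equivFinOfCardEq hs.card_eq).symm j
  have hg_mem j : g j ∈ s := Subtype.prop _
  have hg_inj : Function.Injective g := Subtype.val_injective.comp (Equiv.injective _)
  have hfg p j : f p ≠ g j := fun h =>
    Set.disjoint_left.1 hfs (Set.mem_range_self p) (h ▸ hg_mem j)
  let e : Fin (m + 1) × Fin t → α := fun p => Fin.cases (g p.2) (fun i => f (i, p.2)) p.1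
  have he_inj : Function.Injective e := by
    rintro ⟨i, j⟩ ⟨i', j'⟩ h
    cases i using Fin.cases <;> cases i' using Fin.cases <;>
      simp only [e, Fin.cases_zero, Fin.cases_succ] at h
    · rw [hg_inj h]
    · exact absurd h.symm (hfg _ _)
    · exact absurd h (hfg _ _)
    · simpa using f.injective h
  refine ⟨⟨⟨e, ?_⟩, he_inj⟩⟩
  rintro ⟨i, j⟩ ⟨i', j'⟩ hadj
  obtain ⟨hne, rfl : i = i'⟩ := kCliques_adj.1 hadj
  have hj : j ≠ j' := fun h => hne (by rw [h])
  cases i using Fin.cases with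
  | zero => exact hs.isClique (hg_mem j) (hg_mem j') (hg_inj.ne hj)
  | succ i => exact f.toHom.map_adj (kCliques_adj.2 ⟨by simpa using hj, rfl⟩)

theorem ncard_range_copy_kCliques {m t : ℕ} (f : Copy (kCliques m t) G) :
    (Set.range f).ncard = m * t := by
  rw [← Copy.coe_toHom, Set.ncard_range_of_injective f.injective, Nat.card_prod, Nat.card_fin,
    Nat.card_fin]

theorem neighborSet_inter_subset_range_of_not_isContained {m : ℕ}
    (hG : ¬ kCliques (m + 1) 3 ⊑ G) (f : Copy (kCliques m 3) G) {u v : α} (huv : G.Adj u v)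
    (hu : u ∉ Set.range f) (hv : v ∉ Set.range f) :
    G.neighborSet u ∩ G.neighborSet v ⊆ Set.range f := by
  classical
  rintro w ⟨huw, hvw⟩
  by_contra hw
  refine hG (kCliques_succ_isContained f (is3Clique_triple_iff.2 ⟨huv, huw, hvw⟩) ?_)
  refine Set.disjoint_right.2 fun x hx => ?_
  simp only [coe_insert, coe_singleton, Set.mem_insert_iff, Set.mem_singleton_iff] at hx
  rcases hx with rfl | rfl | rfl <;> assumption

theorem ncard_neighborSet_inter_le_of_not_isContained [Finite α] {m : ℕ}
    (hG : ¬ kCliques (m + 1) 3 ⊑ G) (f : Copy (kCliques m 3) G) {u v : α} (huv : G.Adj u v)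
    (hu : u ∉ Set.range f) (hv : v ∉ Set.range f) :
    (G.neighborSet u ∩ G.neighborSet v).ncard ≤ 3 * m := by
  rw [mul_comm, ← ncard_range_copy_kCliques f]
  exact Set.ncard_le_ncard (neighborSet_inter_subset_range_of_not_isContained hG f huv hu hv)

end

theorem stmt_12_general {α : Type*} [Fintype α] (k : ℕ) (G : SimpleGraph α)
    (hG : ¬ HasCopy G (kCliques k 3)) (u2 u3 : α)
    (h2 : HasCopy (G.induce ({u2}ᶜ : Set α)) (kCliques (k - 1) 3))
    (h3 : HasCopy (G.induce ({u3}ᶜ : Set α)) (kCliques (k - 1) 3))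
    (A : Set α)
    (hA : 6 * (k - 1) + 1 ≤ (G.neighborSet u2 ∩ G.neighborSet u3 ∩ A).ncard) :
    ∃ u0 ∈ A ∩ G.neighborSet u2 ∩ G.neighborSet u3,
      (G.neighborSet u0 ∩ G.neighborSet u2).ncard ≤ 3 * (k - 1) ∧
      (G.neighborSet u0 ∩ G.neighborSet u3).ncard ≤ 3 * (k - 1) := by
  obtain ⟨m, rfl⟩ : ∃ m, k = m + 1 := Nat.exists_eq_succ_of_ne_zero fun hk =>
    hG (hasCopy_iff_isContained.2 (hk ▸ IsContained.of_isEmpty))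
  simp only [hasCopy_iff_isContained, Nat.add_sub_cancel] at hG h2 h3 hA ⊢
  obtain ⟨f2, hu2⟩ := Copy.exists_notMem_range_of_induce_compl h2
  obtain ⟨f3, hu3⟩ := Copy.exists_notMem_range_of_induce_compl h3
  have hcard : (Set.range f2 ∪ Set.range f3).ncard <
      (G.neighborSet u2 ∩ G.neighborSet u3 ∩ A).ncard :=
    calc _ ≤ (Set.range f2).ncard + (Set.range f3).ncard := Set.ncard_union_le _ _
      _ < 6 * m + 1 := by rw [ncard_range_copy_kCliques, ncard_range_copy_kCliques]; omega
      _ ≤ _ := hA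
  obtain ⟨u0, ⟨⟨hu02, hu03⟩, hu0A⟩, hu0⟩ := Set.exists_mem_notMem_of_ncard_lt_ncard hcard
  rw [Set.mem_union, not_or] at hu0
  exact ⟨u0, ⟨⟨hu0A, hu02⟩, hu03⟩,
    ncard_neighborSet_inter_le_of_not_isContained hG f2 hu02.symm hu0.1 hu2,
    ncard_neighborSet_inter_le_of_not_isContained hG f3 hu03.symm hu0.2 hu3⟩

/-- Claim: let `G` contain no `k` disjoint triangles, let `u_2 u_3` be an edge such that
both `G − u_2` and `G − u_3` contain `k−1` disjoint triangles, and let `A` be a vertex set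
with `|N(u_2) ∩ N(u_3) ∩ A| ≥ 6(k−1)+1`. Then some `u_0 ∈ A ∩ N(u_2) ∩ N(u_3)` satisfies
`|N(u_0) ∩ N(u_i)| ≤ 3(k−1)` for `i = 2, 3`. -/
theorem stmt_12 {α : Type*} [Fintype α] (k : ℕ) (hk : 2 ≤ k) (G : SimpleGraph α)
    (hG : ¬ HasCopy G (kCliques k 3)) (u2 u3 : α) (hadj : G.Adj u2 u3)
    (h2 : HasCopy (G.induce ({u2}ᶜ : Set α)) (kCliques (k - 1) 3))
    (h3 : HasCopy (G.induce ({u3}ᶜ : Set α)) (kCliques (k - 1) 3))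
    (A : Set α)
    (hA : 6 * (k - 1) + 1 ≤ (G.neighborSet u2 ∩ G.neighborSet u3 ∩ A).ncard) :
    ∃ u0 ∈ A ∩ G.neighborSet u2 ∩ G.neighborSet u3,
      (G.neighborSet u0 ∩ G.neighborSet u2).ncard ≤ 3 * (k - 1) ∧
      (G.neighborSet u0 ∩ G.neighborSet u3).ncard ≤ 3 * (k - 1) :=
  stmt_12_general k G hG u2 u3 h2 h3 A hA
end
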